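/- arXiv:2605.12307 — 3 statements merged into one kernel-verified Lean document; each statement's English description precedes it below -/
import Mathlib

section
/- Let E be a graded, negatively bounded module over a finite-dimensional negatively graded nilpotent Lie algebra m, with all graded components E_i finite-dimensional. Let h = [m,m] and let H(E) = {a ∈ E : h·a = 0}. Then E is finite-dimensional if and only if H(E) is finite-dimensional. -/
/-- The submodule `H(E) = {a ∈ E : [m,m] · a = 0}` of elements annihilated by the
derived subalgebra `h = [m,m]` (it suffices to annihilate all brackets). -/
def annDerived (k L E : Type*) [Field k] [LieRing L] [LieAlgebra k L]
    [AddCommGroup E] [Module k E] [LieRingModule L E] [LieModule k L E] :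
    Submodule k E where
  carrier := {a | ∀ x y : L, ⁅⁅x, y⁆, a⁆ = 0}
  add_mem' := by
    intro a b ha hb x y
    rw [lie_add, ha x y, hb x y, add_zero]
  zero_mem' := by intro x y; simp
  smul_mem' := by
    intro c a ha x y
    rw [lie_smul, ha x y, smul_zero]

namespace TanakaAux


lemma nat_eventually_const (g : ℕ → ℕ) (hg : ∀ n, g (n + 1) ≤ g n) :
    ∃ n₀, ∀ m, n₀ ≤ m → g m = g n₀ := by
  have hanti : Antitone g := antitone_nat_of_succ_le hg
  have hne : (Set.range g).Nonempty := ⟨g 0, 0, rfl⟩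
  obtain ⟨n₀, hn₀⟩ := Nat.sInf_mem hne
  refine ⟨n₀, fun m hm => le_antisymm (hn₀ ▸ hanti hm) ?_⟩
  rw [hn₀]
  exact Nat.sInf_le ⟨m, rfl⟩

lemma int_stab (f : ℤ → ℕ) (d : ℕ) (hd : 0 < d) (J : ℤ)
    (hf : ∀ j : ℤ, J ≤ j → f (j + d) ≤ f j) :
    ∃ L : ℤ, J ≤ L ∧ ∀ j : ℤ, L ≤ j → f (j + d) = f j := by
  set g : ℕ → ℕ := fun n => ∑ r ∈ Finset.range d, f (J + n * d + r) with hg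
  have hgle : ∀ n, ∀ r ∈ Finset.range d, f (J + (n + 1 : ℕ) * d + r) ≤ f (J + n * d + r) := by
    intro n r _
    have h1 : (J + (n + 1 : ℕ) * d + r : ℤ) = (J + n * d + r) + d := by push_cast; ring
    rw [h1]
    refine hf _ ?_
    have : (0:ℤ) ≤ (n:ℤ) * d + r := by positivity
    omega
  have hgmono : ∀ n, g (n + 1) ≤ g n := fun n => Finset.sum_le_sum (hgle n)
  obtain ⟨n₀, hn₀⟩ := nat_eventually_const g hgmono
  refine ⟨J + n₀ * d, by nlinarith [sq_nonneg ((n₀:ℤ))], ?_⟩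
  intro j hj
  have hdz : (0 : ℤ) < d := by exact_mod_cast hd
  set s : ℤ := (j - J) / d with hs
  set r : ℤ := (j - J) % d with hr
  have heq : (d : ℤ) * s + r = j - J := Int.mul_ediv_add_emod _ _
  have hr0 : 0 ≤ r := Int.emod_nonneg _ (by omega)
  have hrd : r < d := Int.emod_lt_of_pos _ hdz
  have hsn : (n₀ : ℤ) ≤ s := by
    rw [hs, Int.le_ediv_iff_mul_le hdz]
    nlinarith [hj]
  have hs0 : 0 ≤ s := le_trans (by positivity) hsn
  have hsnat : n₀ ≤ s.toNat := by omega
  have hsum : g (s.toNat + 1) = g s.toNat := by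
    rw [hn₀ _ (by omega), hn₀ _ hsnat]
  simp only [hg] at hsum
  have hterm := (Finset.sum_eq_sum_iff_of_le (hgle s.toNat)).mp hsum r.toNat
    (Finset.mem_range.mpr (by omega))
  have hsd : ((s.toNat : ℕ) : ℤ) = s := Int.toNat_of_nonneg hs0
  have hrdn : ((r.toNat : ℕ) : ℤ) = r := Int.toNat_of_nonneg hr0
  have e1 : (J + ((s.toNat + 1 : ℕ) : ℤ) * d + (r.toNat : ℤ)) = j + d := by
    push_cast [hsd, hrdn]; linear_combination heq
  have e2 : (J + ((s.toNat : ℕ) : ℤ) * d + (r.toNat : ℤ)) = j := by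
    push_cast [hsd, hrdn]; linear_combination heq
  rw [e1, e2] at hterm
  omega

section Core

variable {k E : Type*} [Field k] [CharZero k] [AddCommGroup E] [Module k E]


variable {k E : Type*} [Field k] [CharZero k] [AddCommGroup E] [Module k E]

def cVmap (V : ℤ → Submodule k E) {a b : ℤ} (h : a = b) : V a →ₗ[k] V b :=
  (LinearEquiv.ofEq (V a) (V b) (by rw [h])).toLinearMap

lemma cVmap_coe (V : ℤ → Submodule k E) {a b : ℤ} (h : a = b) (x : V a) :
    ((cVmap V h x : V b) : E) = (x : E) := by subst h; rfl

theorem core (W : ℤ → Submodule k E) (hWfin : ∀ j, FiniteDimensional k (W j))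
    (F : Submodule k E)
    {T : Type} [Fintype T] (c : T → k) (X Y : T → Module.End k E) (p q : T → ℤ)
    (μ' d : ℕ) (hd : 0 < d)
    (hp : ∀ t, -(μ' : ℤ) ≤ p t) (hq : ∀ t, -(μ' : ℤ) ≤ q t) (hq0 : ∀ t, q t ≤ 0)
    (hpq : ∀ t, p t + q t = -(d : ℤ))
    (hXW : ∀ t (j : ℤ), ∀ a ∈ W j, X t a ∈ W (j + p t))
    (hYW : ∀ t (j : ℤ), ∀ a ∈ W j, Y t a ∈ W (j + q t))
    (hXF : ∀ t, ∀ a ∈ F, X t a ∈ F)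
    (hYF : ∀ t, ∀ a ∈ F, Y t a ∈ F)
    (Z : Module.End k E)
    (hZdef : ∀ a, Z a = ∑ t, c t • (X t (Y t a) - Y t (X t a)))
    (hcommX : ∀ t, ∀ a ∈ F, Z (X t a) = X t (Z a))
    (hcommY : ∀ t, ∀ a ∈ F, Z (Y t a) = Y t (Z a))
    (J₁ : ℤ) (hker : ∀ j : ℤ, J₁ ≤ j → ∀ a ∈ F ⊓ W j, Z a = 0 → a = 0) :
    ∃ L : ℤ, ∀ j : ℤ, L ≤ j → F ⊓ W j = ⊥ := by
  classical
  set V : ℤ → Submodule k E := fun j => F ⊓ W j with hV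
  have instV : ∀ j, FiniteDimensional k (V j) := by
    intro j
    haveI := hWfin j
    exact Submodule.finiteDimensional_of_le inf_le_right
  have hVF : ∀ j, V j ≤ F := fun j => inf_le_left
  have hXV : ∀ t (j : ℤ), ∀ a ∈ V j, X t a ∈ V (j + p t) :=
    fun t j a ha => ⟨hXF t a ha.1, hXW t j a ha.2⟩
  have hYV : ∀ t (j : ℤ), ∀ a ∈ V j, Y t a ∈ V (j + q t) :=
    fun t j a ha => ⟨hYF t a ha.1, hYW t j a ha.2⟩
  have hZV : ∀ (j : ℤ), ∀ a ∈ V j, Z a ∈ V (j - d) := by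
    intro j a ha
    rw [hZdef]
    refine Submodule.sum_mem _ (fun t _ => Submodule.smul_mem _ _ (Submodule.sub_mem _ ?_ ?_))
    · have h2 := hXV t (j + q t) _ (hYV t j a ha)
      have e : j + q t + p t = j - d := by have := hpq t; omega
      rwa [e] at h2
    · have h2 := hYV t (j + p t) _ (hXV t j a ha)
      have e : j + p t + q t = j - d := by have := hpq t; omega
      rwa [e] at h2
  -- restricted maps
  set Xr : ∀ (t : T) (j : ℤ), V j →ₗ[k] V (j + p t) := fun t j => (X t).restrict (hXV t j) with hXr
  set Yr : ∀ (t : T) (j : ℤ), V j →ₗ[k] V (j + q t) := fun t j => (Y t).restrict (hYV t j) with hYr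
  set Zr : ∀ j : ℤ, V j →ₗ[k] V (j - d) := fun j => Z.restrict (hZV j) with hZr
  -- injectivity
  have hZr_inj : ∀ j : ℤ, J₁ ≤ j → Function.Injective (Zr j) := by
    intro j hj a b hab
    have h1 : Z ((a : E) - b) = 0 := by
      have : ((Zr j a : V (j - d)) : E) = ((Zr j b : V (j - d)) : E) := by rw [hab]
      simp only [hZr, LinearMap.restrict_apply] at this
      rw [map_sub, this, sub_self]
    have h2 := hker j hj ((a : E) - b) (Submodule.sub_mem _ a.2 b.2) h1
    exact Subtype.ext (by rw [sub_eq_zero] at h2; exact h2)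
  have hinjE : ∀ j : ℤ, J₁ ≤ j → ∀ (a b : V j), Z (a : E) = Z (b : E) → a = b := by
    intro j hj a b hab
    apply hZr_inj j hj
    apply Subtype.ext
    simp only [hZr, LinearMap.restrict_apply]
    exact hab
  -- dimension function
  set D : ℤ → ℕ := fun j => Module.finrank k (V j) with hD
  have hDle : ∀ j : ℤ, J₁ ≤ j → D (j + d) ≤ D j := by
    intro j hj
    haveI := instV j
    haveI := instV (j + d)
    have h1 := hZr_inj (j + d) (by omega)
    have h2 : D (j + d) ≤ D (j + d - d) := LinearMap.finrank_le_finrank_of_injective h1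
    have e : j + (d : ℤ) - d = j := by omega
    rwa [e] at h2
  obtain ⟨L₀, hL₀J, hL₀⟩ := int_stab D d hd J₁ hDle
  -- bijectivity of Zr j for j ≥ L₀ + d
  have hbij : ∀ j : ℤ, L₀ + d ≤ j → Function.Bijective (Zr j) := by
    intro j hj
    haveI := instV j
    haveI := instV (j - d)
    have hinj := hZr_inj j (by omega)
    refine ⟨hinj, ?_⟩
    have hrank : D (j - d + d) = D (j - d) := hL₀ (j - d) (by omega)
    have e : j - (d : ℤ) + d = j := by omega
    rw [e] at hrank
    have hr : LinearMap.range (Zr j) = ⊤ := by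
      apply Submodule.eq_top_of_finrank_eq
      rw [LinearMap.finrank_range_of_inj hinj]
      exact hrank
    intro w
    have hw : w ∈ LinearMap.range (Zr j) := by rw [hr]; trivial
    obtain ⟨v, hv⟩ := hw
    exact ⟨v, hv⟩
  -- total inverse
  set Zinv : ∀ j : ℤ, V (j - d) →ₗ[k] V j := fun j =>
    if h : Function.Bijective (Zr j) then (LinearEquiv.ofBijective (Zr j) h).symm.toLinearMap
    else 0 with hZinv
  have hZinv_right : ∀ j : ℤ, L₀ + d ≤ j → ∀ w : V (j - d), Zr j (Zinv j w) = w := by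
    intro j hj w
    rw [hZinv]
    simp only [dif_pos (hbij j hj)]
    exact (LinearEquiv.ofBijective (Zr j) (hbij j hj)).apply_symm_apply w
  have hZinv_coe : ∀ j : ℤ, L₀ + d ≤ j → ∀ w : V (j - d), Z ((Zinv j w : V j) : E) = (w : E) := by
    intro j hj w
    have := hZinv_right j hj w
    have h2 : ((Zr j (Zinv j w) : V (j - d)) : E) = (w : E) := by rw [this]
    simpa only [hZr, LinearMap.restrict_apply] using h2
  have hZinv_left : ∀ j : ℤ, L₀ + d ≤ j → ∀ v : V j, Zinv j (Zr j v) = v := by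
    intro j hj v
    rw [hZinv]
    simp only [dif_pos (hbij j hj)]
    exact (LinearEquiv.ofBijective (Zr j) (hbij j hj)).symm_apply_apply v
  -- composite maps
  have epq : ∀ (t : T) (j : ℤ), j + q t + p t = j - d := fun t j => by have := hpq t; omega
  have eqp : ∀ (t : T) (j : ℤ), j + p t + q t = j - d := fun t j => by have := hpq t; omega
  set XY : ∀ (t : T) (j : ℤ), V j →ₗ[k] V (j - d) := fun t j =>
    (cVmap V (epq t j)).comp ((Xr t (j + q t)).comp (Yr t j)) with hXY
  set YX : ∀ (t : T) (j : ℤ), V j →ₗ[k] V (j - d) := fun t j =>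
    (cVmap V (eqp t j)).comp ((Yr t (j + p t)).comp (Xr t j)) with hYX
  have hXY_coe : ∀ t j (v : V j), ((XY t j v : V (j - d)) : E) = X t (Y t (v : E)) := by
    intro t j v
    rw [hXY]
    simp only [LinearMap.comp_apply, cVmap_coe V]
    simp only [hXr, hYr, LinearMap.restrict_apply]
  have hYX_coe : ∀ t j (v : V j), ((YX t j v : V (j - d)) : E) = Y t (X t (v : E)) := by
    intro t j v
    rw [hYX]
    simp only [LinearMap.comp_apply, cVmap_coe V]
    simp only [hXr, hYr, LinearMap.restrict_apply]
  -- trace functions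
  set β : T → ℤ → k := fun t j => LinearMap.trace k (V j) ((Zinv j).comp (YX t j)) with hβ
  set α : T → ℤ → k := fun t j => LinearMap.trace k (V j) ((Zinv j).comp (XY t j)) with hα
  have hXr_coe : ∀ t (j : ℤ) (v : V j), ((Xr t j v : V (j + p t)) : E) = X t (v : E) := by
    intro t j v; simp only [hXr, LinearMap.restrict_apply]
  have hYr_coe : ∀ t (j : ℤ) (v : V j), ((Yr t j v : V (j + q t)) : E) = Y t (v : E) := by
    intro t j v; simp only [hYr, LinearMap.restrict_apply]
  -- Identity 1
  have I1 : ∀ j : ℤ, L₀ + d ≤ j → (D j : k) = ∑ t, c t * (α t j - β t j) := by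
    intro j hj
    haveI := instV j
    haveI := instV (j - (d : ℤ))
    have hsplit : Zr j = ∑ t, c t • (XY t j - YX t j) := by
      apply LinearMap.ext; intro v
      apply Subtype.ext
      have lhs : ((Zr j v : V (j - d)) : E) = Z (v : E) := by
        simp only [hZr, LinearMap.restrict_apply]
      rw [lhs, hZdef]
      rw [LinearMap.sum_apply, AddSubmonoidClass.coe_finset_sum]
      apply Finset.sum_congr rfl
      intro t _
      rw [LinearMap.smul_apply, LinearMap.sub_apply, SetLike.val_smul, AddSubgroupClass.coe_sub,
        hXY_coe, hYX_coe]
    have hid : (Zinv j).comp (Zr j) = LinearMap.id := by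
      apply LinearMap.ext; intro v
      simp only [LinearMap.comp_apply, LinearMap.id_apply]
      exact hZinv_left j hj v
    have e1 : (D j : k) = LinearMap.trace k (V j) ((Zinv j).comp (Zr j)) := by
      rw [hid, LinearMap.trace_id]
    rw [e1, hsplit]
    have e2 : (Zinv j).comp (∑ t, c t • (XY t j - YX t j))
        = ∑ t, c t • ((Zinv j).comp (XY t j) - (Zinv j).comp (YX t j)) := by
      apply LinearMap.ext; intro v
      simp [LinearMap.comp_apply, LinearMap.sum_apply, map_sum, map_smul, map_sub]
    rw [e2, map_sum]
    apply Finset.sum_congr rfl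
    intro t _
    rw [map_smul, map_sub, smul_eq_mul]
  -- Identity 2
  have I2 : ∀ t (j : ℤ), L₀ + d + μ' ≤ j → α t j = β t (j + q t) := by
    intro t j hj
    have hjq : L₀ + d ≤ j + q t := by have := hq t; omega
    haveI := instV j
    haveI := instV (j + q t)
    have hassoc : (Zinv j).comp (XY t j)
        = ((Zinv j).comp ((cVmap V (epq t j)).comp (Xr t (j + q t)))).comp (Yr t j) := by
      simp only [hXY]
      rfl
    simp only [hα, hβ]
    rw [hassoc, LinearMap.trace_comp_comm']
    congr 1
    apply LinearMap.ext; intro v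
    apply hinjE (j + q t) (by omega)
    have lhsZ : Z (((Yr t j) (((Zinv j).comp ((cVmap V (epq t j)).comp (Xr t (j + q t)))) v) : E))
        = Y t (X t (v : E)) := by
      set u := ((Zinv j).comp ((cVmap V (epq t j)).comp (Xr t (j + q t)))) v with hu
      rw [hYr_coe]
      rw [hcommY t _ (hVF j u.2)]
      have hZu : Z ((u : V j) : E) = X t (v : E) := by
        rw [hu]
        simp only [LinearMap.comp_apply]
        rw [hZinv_coe j (by omega), cVmap_coe, hXr_coe]
      rw [hZu]
    have rhsZ : Z ((((Zinv (j + q t)).comp (YX t (j + q t))) v : E)) = Y t (X t (v : E)) := by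
      simp only [LinearMap.comp_apply]
      rw [hZinv_coe (j + q t) hjq, hYX_coe]
    simp only [LinearMap.comp_apply] at lhsZ rhsZ ⊢
    rw [lhsZ, rhsZ]
  -- Identity 3
  have I3 : ∀ t (j : ℤ), L₀ + d ≤ j → β t j = β t (j + d) := by
    intro t j hj
    haveI := instV j
    haveI := instV (j + (d : ℤ))
    have h0 : j = j + (d : ℤ) - d := by omega
    have h1 : j + (d : ℤ) - d = j := by omega
    have key : (Zinv j).comp (YX t j)
        = ((cVmap V h1).comp (YX t (j + d))).comp ((Zinv (j + d)).comp (cVmap V h0)) := by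
      apply LinearMap.ext; intro v
      apply hinjE j (by omega)
      have lhsZ : Z ((((Zinv j).comp (YX t j)) v : E)) = Y t (X t (v : E)) := by
        simp only [LinearMap.comp_apply]
        rw [hZinv_coe j hj, hYX_coe]
      have rhsZ : Z (((((cVmap V h1).comp (YX t (j + d))).comp
          ((Zinv (j + d)).comp (cVmap V h0))) v : E)) = Y t (X t (v : E)) := by
        simp only [LinearMap.comp_apply]
        set u := Zinv (j + d) (cVmap V h0 v) with hu
        rw [cVmap_coe, hYX_coe]
        rw [hcommY t _ (hXF t _ (hVF _ u.2))]
        rw [hcommX t _ (hVF _ u.2)]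
        have hZu : Z ((u : V (j + (d:ℤ))) : E) = (v : E) := by
          rw [hu, hZinv_coe (j + d) (by omega), cVmap_coe]
        rw [hZu]
      rw [lhsZ, rhsZ]
    simp only [hβ]
    rw [key, LinearMap.trace_comp_comm']
    congr 1
  -- window sums
  set S : T → ℤ → k := fun t m => ∑ i ∈ Finset.range d, β t (m + i) with hS
  have hSstep : ∀ t (m : ℤ), L₀ + d ≤ m → S t (m + 1) = S t m := by
    intro t m hm
    simp only [hS]
    have lhs : ∑ i ∈ Finset.range d, β t (m + 1 + i) = ∑ i ∈ Finset.Ico 1 (d + 1), β t (m + i) := by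
      rw [Finset.sum_Ico_eq_sum_range]
      simp only [Nat.add_sub_cancel]
      apply Finset.sum_congr rfl
      intro i _
      congr 1
      push_cast; ring
    have rhs : ∑ i ∈ Finset.range d, β t (m + i) = ∑ i ∈ Finset.Ico 0 d, β t (m + i) := by
      rw [Finset.range_eq_Ico]
    rw [lhs, rhs, Finset.sum_Ico_succ_top (by omega : 1 ≤ d),
      Finset.sum_eq_sum_Ico_succ_bot (by omega : 0 < d)]
    have hper : β t (m + (d : ℕ)) = β t (m + (0 : ℕ)) := by
      have := I3 t m hm
      push_cast
      rw [add_zero]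
      exact this.symm
    rw [hper]
    push_cast
    ring
  have hSconst : ∀ t (n : ℕ) (m : ℤ), L₀ + d ≤ m → S t (m + n) = S t m := by
    intro t n
    induction n with
    | zero => intro m _; simp
    | succ n ih =>
      intro m hm
      have e : m + ((n : ℕ) + 1 : ℕ) = (m + n) + 1 := by push_cast; ring
      rw [e, hSstep t (m + n) (by omega)]
      exact ih m hm
  -- conclusion
  refine ⟨L₀ + d + μ' + 1, ?_⟩
  intro j hj
  haveI := instV j
  have hsum0 : ∑ i ∈ Finset.range d, (D (j + i) : k) = 0 := by
    have step1 : ∀ i ∈ Finset.range d, (D (j + i) : k) = ∑ t, c t * (α t (j + i) - β t (j + i)) := by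
      intro i _
      exact I1 (j + i) (by omega)
    rw [Finset.sum_congr rfl step1, Finset.sum_comm]
    apply Finset.sum_eq_zero
    intro t _
    rw [← Finset.mul_sum]
    rw [Finset.sum_sub_distrib]
    have e1 : ∑ i ∈ Finset.range d, α t (j + i) = ∑ i ∈ Finset.range d, β t ((j + q t) + i) := by
      apply Finset.sum_congr rfl
      intro i _
      rw [I2 t (j + i) (by omega)]
      congr 1
      ring
    have e3 : (j + q t) + (((-q t).toNat : ℕ) : ℤ) = j := by
      have := hq0 t; omega
    have e2 : S t (j + q t) = S t j := by
      have h4 := hSconst t ((-q t).toNat) (j + q t) (by have := hq t; omega)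
      rw [e3] at h4
      exact h4.symm
    rw [e1]
    have e5 : (∑ i ∈ Finset.range d, β t ((j + q t) + i)) = ∑ i ∈ Finset.range d, β t (j + i) := by
      have h6 : S t (j + q t) = S t j := e2
      simp only [hS] at h6
      exact h6
    rw [e5, sub_self, mul_zero]
  have hsumN : ∑ i ∈ Finset.range d, D (j + i) = 0 := by
    have := hsum0
    rw [← Nat.cast_sum] at this
    exact_mod_cast this
  have hD0 : D j = 0 := by
    have h0 := (Finset.sum_eq_zero_iff.mp hsumN) 0 (Finset.mem_range.mpr hd)
    simpa using h0
  exact Submodule.finrank_eq_zero.mp hD0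


end Core

end TanakaAux

namespace TanakaOuter


variable {k L : Type*} [Field k] [LieRing L] [LieAlgebra k L]

def Cg (mgr : ℤ → Submodule k L) : ℕ → ℤ → Submodule k L
  | 0 => mgr
  | (n + 1) => fun i => ⨆ p : ℤ,
      Submodule.span k {w : L | ∃ x ∈ mgr p, ∃ y ∈ Cg mgr n (i - p), w = ⁅x, y⁆}

variable (mgr : ℤ → Submodule k L)

lemma bracket_mem_Cg (n : ℕ) (p i : ℤ) {x z : L} (hx : x ∈ mgr p) (hz : z ∈ Cg mgr n i) :
    ⁅x, z⁆ ∈ Cg mgr (n + 1) (p + i) := by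
  have : ⁅x, z⁆ ∈ Submodule.span k
      {w : L | ∃ x' ∈ mgr p, ∃ y ∈ Cg mgr n (p + i - p), w = ⁅x', y⁆} := by
    apply Submodule.subset_span
    exact ⟨x, hx, z, by simpa using hz, rfl⟩
  exact le_iSup (fun p' => Submodule.span k
    {w : L | ∃ x' ∈ mgr p', ∃ y ∈ Cg mgr n (p + i - p'), w = ⁅x', y⁆}) p this

lemma Cg_succ_induction (n : ℕ) (i : ℤ) {z : L} (hz : z ∈ Cg mgr (n + 1) i)
    {P : L → Prop} (h0 : P 0) (hadd : ∀ a b, P a → P b → P (a + b))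
    (hsmul : ∀ (c : k) a, P a → P (c • a))
    (hbr : ∀ (p : ℤ), ∀ x ∈ mgr p, ∀ y ∈ Cg mgr n (i - p), P ⁅x, y⁆) : P z := by
  refine Submodule.iSup_induction (motive := P) _ hz (fun p w hw => ?_) h0 hadd
  refine Submodule.span_induction (p := fun w _ => P w) (fun w hw => ?_) h0
    (fun a b _ _ ha hb => hadd a b ha hb) (fun c a _ ha => hsmul c a ha) hw
  obtain ⟨x, hx, y, hy, rfl⟩ := hw
  exact hbr p x hx y hy

lemma Cg_le_mgr (hmbrk : ∀ i j : ℤ, ∀ x ∈ mgr i, ∀ y ∈ mgr j, ⁅x, y⁆ ∈ mgr (i + j)) :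
    ∀ (n : ℕ) (i : ℤ), Cg mgr n i ≤ mgr i := by
  intro n
  induction n with
  | zero => exact fun i => le_rfl
  | succ n ih =>
    intro i z hz
    refine Cg_succ_induction mgr n i hz (Submodule.zero_mem _)
      (fun a b ha hb => Submodule.add_mem _ ha hb)
      (fun c a ha => Submodule.smul_mem _ c ha) ?_
    intro p x hx y hy
    have := hmbrk p (i - p) x hx y (ih _ hy)
    simpa using this

lemma Cg_succ_le (hmbrk : ∀ i j : ℤ, ∀ x ∈ mgr i, ∀ y ∈ mgr j, ⁅x, y⁆ ∈ mgr (i + j)) :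
    ∀ (n : ℕ) (i : ℤ), Cg mgr (n + 1) i ≤ Cg mgr n i := by
  intro n
  induction n with
  | zero => exact fun i => Cg_le_mgr mgr hmbrk 1 i
  | succ n ih =>
    intro i z hz
    refine Cg_succ_induction mgr (n+1) i hz (Submodule.zero_mem _)
      (fun a b ha hb => Submodule.add_mem _ ha hb)
      (fun c a ha => Submodule.smul_mem _ c ha) ?_
    intro p x hx y hy
    have h2 := bracket_mem_Cg mgr n p (i - p) hx (ih _ hy)
    simpa using h2

lemma Cg_bot_high (μ : ℕ) (hmneg : ∀ i : ℤ, (0 ≤ i ∨ i < -(μ : ℤ)) → mgr i = ⊥) :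
    ∀ (n : ℕ) (i : ℤ), -((n : ℤ) + 1) < i → Cg mgr n i = ⊥ := by
  intro n
  induction n with
  | zero =>
    intro i hi
    exact hmneg i (Or.inl (by omega))
  | succ n ih =>
    intro i hi
    rw [eq_bot_iff]
    intro z hz
    refine Cg_succ_induction mgr n i hz (Submodule.zero_mem _)
      (fun a b ha hb => Submodule.add_mem _ ha hb)
      (fun c a ha => Submodule.smul_mem _ c ha) ?_
    intro p x hx y hy
    by_cases hp : 0 ≤ p
    · rw [hmneg p (Or.inl hp)] at hx
      simp only [Submodule.mem_bot] at hx
      simp [hx]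
    · have : Cg mgr n (i - p) = ⊥ := ih _ (by push_cast at hi ⊢; omega)
      rw [this] at hy
      simp only [Submodule.mem_bot] at hy
      simp [hy]


variable {E : Type*} [AddCommGroup E] [Module k E] [LieRingModule L E] [LieModule k L E]

/-- Annihilator of `C^{n+1} m` in `E`. -/
def An (mgr : ℤ → Submodule k L) (n : ℕ) : Submodule k E where
  carrier := {a | ∀ (i : ℤ) (z : L), z ∈ Cg mgr n i → ⁅z, a⁆ = 0}
  add_mem' := by
    intro a b ha hb i z hz
    rw [lie_add, ha i z hz, hb i z hz, add_zero]
  zero_mem' := by intro i z hz; simp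
  smul_mem' := by
    intro t a ha i z hz
    rw [lie_smul, ha i z hz, smul_zero]

lemma Cg_le_of_le (hmbrk : ∀ i j : ℤ, ∀ x ∈ mgr i, ∀ y ∈ mgr j, ⁅x, y⁆ ∈ mgr (i + j)) :
    ∀ (m n : ℕ), n ≤ m → ∀ i : ℤ, Cg mgr m i ≤ Cg mgr n i := by
  intro m
  induction m with
  | zero => intro n hn i; interval_cases n; exact le_rfl
  | succ m ih =>
    intro n hn i
    rcases Nat.eq_or_lt_of_le hn with h | h
    · subst h; exact le_rfl
    · exact le_trans (Cg_succ_le mgr hmbrk m i) (ih n (by omega) i)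

end TanakaOuter


/-- generalized Tanaka finiteness criterion: Let `m` be a
finite-dimensional negatively graded nilpotent Lie algebra (components `mgr i`,
vanishing outside `-μ ≤ i ≤ -1`), and let `E` be a graded `m`-module (components `W j`,
each finite-dimensional, vanishing for `j` sufficiently small, with
`m_i · E_j ⊆ E_{i+j}`).  Then `E` is finite-dimensional if and only if
`H(E) = {a ∈ E : [m,m]·a = 0}` is finite-dimensional. -/
theorem stmt4 (k L E : Type*) [Field k] [CharZero k] [LieRing L] [LieAlgebra k L]
    [FiniteDimensional k L]
    [AddCommGroup E] [Module k E] [LieRingModule L E] [LieModule k L E]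
    (μ : ℕ) (mgr : ℤ → Submodule k L) (hm : DirectSum.IsInternal mgr)
    (hmneg : ∀ i : ℤ, (0 ≤ i ∨ i < -(μ : ℤ)) → mgr i = ⊥)
    (hmbrk : ∀ i j : ℤ, ∀ x ∈ mgr i, ∀ y ∈ mgr j, ⁅x, y⁆ ∈ mgr (i + j))
    (W : ℤ → Submodule k E) (hW : DirectSum.IsInternal W)
    (hWfin : ∀ j, FiniteDimensional k (W j))
    (N : ℤ) (hWbd : ∀ j : ℤ, j < N → W j = ⊥)
    (hact : ∀ i j : ℤ, ∀ x ∈ mgr i, ∀ a ∈ W j, ⁅x, a⁆ ∈ W (i + j)) :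
    FiniteDimensional k E ↔ FiniteDimensional k (annDerived k L E) := by
  classical
  constructor
  · intro h
    exact inferInstance
  intro hfin
  -- decomposition principle on L
  have hLdec : ∀ (P : L → Prop), P 0 → (∀ a b : L, P a → P b → P (a + b)) →
      (∀ (p : ℤ), ∀ x ∈ mgr p, P x) → ∀ x : L, P x := by
    intro P h0 hadd hgr x
    have hx : x ∈ ⨆ i, mgr i := by
      rw [hm.submodule_iSup_eq_top]; trivial
    exact Submodule.iSup_induction (motive := P) mgr hx hgr h0 hadd
  -- brackets with Cg n elements annihilate An (n+1)
  have S1' : ∀ (n : ℕ) (i : ℤ) (x z : L), z ∈ TanakaOuter.Cg mgr n i →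
      ∀ a ∈ (TanakaOuter.An mgr (n + 1) : Submodule k E), ⁅(⁅x, z⁆ : L), a⁆ = 0 := by
    intro n i x z hz a ha
    refine hLdec (fun x => ⁅(⁅x, z⁆ : L), a⁆ = 0) ?_ ?_ ?_ x
    · simp
    · intro u v hu hv
      rw [add_lie, add_lie, hu, hv, add_zero]
    · intro p' x' hx'
      exact ha _ _ (TanakaOuter.bracket_mem_Cg mgr n p' i hx' hz)
  -- An is stable under the L-action
  have AnLie : ∀ (n : ℕ) (x : L) (a : E), a ∈ (TanakaOuter.An mgr n : Submodule k E) →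
      ⁅x, a⁆ ∈ (TanakaOuter.An mgr n : Submodule k E) := by
    intro n x a ha i z hz
    have h2 : ⁅(⁅x, z⁆ : L), a⁆ = 0 := by
      refine hLdec (fun x => ⁅(⁅x, z⁆ : L), a⁆ = 0) ?_ ?_ ?_ x
      · simp
      · intro u v hu hv
        rw [add_lie, add_lie, hu, hv, add_zero]
      · intro p' x' hx'
        exact ha _ _ (TanakaOuter.Cg_succ_le mgr hmbrk n (p' + i)
          (TanakaOuter.bracket_mem_Cg mgr n p' i hx' hz))
    have h3 : ⁅(⁅z, x⁆ : L), a⁆ = 0 := by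
      have e : (⁅z, x⁆ : L) = -⁅x, z⁆ := (lie_skew z x).symm ▸ rfl
      rw [e, neg_lie, h2, neg_zero]
    rw [leibniz_lie, ha i z hz, lie_zero, add_zero, h3]
  -- An is monotone
  have AnMono : ∀ n : ℕ, (TanakaOuter.An mgr n : Submodule k E) ≤ TanakaOuter.An mgr (n + 1) := by
    intro n a ha i z hz
    refine TanakaOuter.Cg_succ_induction mgr n i hz (P := fun w => ⁅w, a⁆ = 0) ?_ ?_ ?_ ?_
    · simp
    · intro u v hu hv; rw [add_lie, hu, hv, add_zero]
    · intro c' w hw; rw [smul_lie, hw, smul_zero]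
    · intro p' x hx y hy
      rw [lie_lie, ha _ _ hy, lie_zero, zero_sub]
      have h3 : ⁅y, (⁅x, a⁆ : E)⁆ = 0 := (AnLie n x a ha) _ _ hy
      rw [h3, neg_zero]
  -- An 1 = annDerived
  have An1 : (TanakaOuter.An mgr 1 : Submodule k E) = annDerived k L E := by
    apply le_antisymm
    · intro a ha x y
      refine hLdec (fun x => ⁅(⁅x, y⁆ : L), a⁆ = 0) ?_ ?_ ?_ x
      · simp
      · intro u v hu hv; rw [add_lie, add_lie, hu, hv, add_zero]
      · intro p' x' hx'
        refine hLdec (fun y => ⁅(⁅x', y⁆ : L), a⁆ = 0) ?_ ?_ ?_ y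
        · simp
        · intro u v hu hv; rw [lie_add, add_lie, hu, hv, add_zero]
        · intro q' y' hy'
          exact ha _ _ (TanakaOuter.bracket_mem_Cg mgr 0 p' q' hx' hy')
    · intro a ha i z hz
      refine TanakaOuter.Cg_succ_induction mgr 0 i hz (P := fun w => ⁅w, a⁆ = 0) ?_ ?_ ?_ ?_
      · simp
      · intro u v hu hv; rw [add_lie, hu, hv, add_zero]
      · intro c' w hw; rw [smul_lie, hw, smul_zero]
      · intro p' x hx y hy
        exact ha x y
  -- An μ = ⊤
  have Cgμbot : ∀ i : ℤ, TanakaOuter.Cg mgr μ i = ⊥ := by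
    intro i
    by_cases hi : -((μ : ℤ) + 1) < i
    · exact TanakaOuter.Cg_bot_high mgr μ hmneg μ i hi
    · rw [eq_bot_iff]
      refine le_trans (TanakaOuter.Cg_le_mgr mgr hmbrk μ i) ?_
      rw [hmneg i (Or.inr (by omega))]
  have Anμtop : (TanakaOuter.An mgr μ : Submodule k E) = ⊤ := by
    rw [eq_top_iff]
    intro a _ i z hz
    rw [Cgμbot i] at hz
    simp only [Submodule.mem_bot] at hz
    simp [hz]
  -- finite-dimensional submodules are tail-trivial
  have fin_TT : ∀ Ssub : Submodule k E, FiniteDimensional k Ssub →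
      ∃ J : ℤ, ∀ j : ℤ, J ≤ j → Ssub ⊓ W j = ⊥ := by
    intro Ssub hS
    by_contra hcon
    push_neg at hcon
    have hinf : {j : ℤ | Ssub ⊓ W j ≠ ⊥}.Infinite := by
      apply Set.infinite_of_not_bddAbove
      rintro ⟨J, hJ⟩
      obtain ⟨j, hj1, hj2⟩ := hcon (J + 1)
      have := hJ hj2
      omega
    haveI := hS
    obtain ⟨tf, htsub, htcard⟩ := hinf.exists_subset_card_eq (Module.finrank k Ssub + 1)
    have hpick : ∀ j ∈ tf, ∃ a : E, a ∈ Ssub ⊓ W j ∧ a ≠ 0 := by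
      intro j hj
      have hne := htsub hj
      simp only [Set.mem_setOf_eq] at hne
      obtain ⟨a, ha, h0⟩ := Submodule.ne_bot_iff _ |>.mp hne
      exact ⟨a, ha, h0⟩
    choose v hv hv0 using hpick
    have hWind : iSupIndep W := hW.submodule_iSupIndep
    have hind : LinearIndependent k (fun j : tf => v j j.2) := by
      apply iSupIndep.linearIndependent (fun j : tf => W j)
      · exact hWind.comp Subtype.val_injective
      · intro j; exact (Submodule.mem_inf.mp (hv j j.2)).2
      · intro j; exact hv0 j j.2
    have hind2 : LinearIndependent k
        (fun j : tf => (⟨v j j.2, (Submodule.mem_inf.mp (hv j j.2)).1⟩ : Ssub)) := by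
      apply LinearIndependent.of_comp Ssub.subtype
      convert hind
      rfl
    have hcard := hind2.fintype_card_le_finrank
    rw [Fintype.card_coe, htcard] at hcard
    omega
  -- tail-trivial ⊤ gives finite-dimensionality
  have TTtop : (∃ J : ℤ, ∀ j : ℤ, J ≤ j → (⊤ : Submodule k E) ⊓ W j = ⊥) →
      FiniteDimensional k E := by
    rintro ⟨J, hJ⟩
    have htop : (⊤ : Submodule k E) ≤ (Finset.Icc N J).sup W := by
      rw [← hW.submodule_iSup_eq_top]
      apply iSup_le
      intro j
      by_cases h1 : j < N
      · rw [hWbd j h1]; exact bot_le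
      · by_cases h2 : j ≤ J
        · exact Finset.le_sup (Finset.mem_Icc.mpr ⟨by omega, h2⟩)
        · have h3 := hJ j (by omega)
          rw [top_inf_eq] at h3
          rw [h3]; exact bot_le
    haveI : ∀ i : ℤ, FiniteDimensional k (W i) := hWfin
    haveI hfd : FiniteDimensional k ↥((Finset.Icc N J).sup W) :=
      Submodule.finiteDimensional_finset_sup (Finset.Icc N J) W
    have h4 : FiniteDimensional k (⊤ : Submodule k E) :=
      Submodule.finiteDimensional_of_le htop
    exact (Submodule.topEquiv (R := k) (M := E)).finiteDimensional
  -- trivial case μ = 0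
  by_cases hμ : μ = 0
  · subst hμ
    have hzero : ∀ x : L, x = 0 := by
      intro x
      refine hLdec (fun x => x = 0) rfl (fun a b ha hb => by rw [ha, hb, add_zero]) ?_ x
      intro p x hx
      have : mgr p = ⊥ := hmneg p (by omega)
      rw [this] at hx
      simpa using hx
    have hADtop : annDerived k L E = ⊤ := by
      rw [eq_top_iff]
      intro a _ x y
      rw [hzero x, zero_lie, zero_lie]
    rw [hADtop] at hfin
    exact (Submodule.topEquiv (R := k) (M := E)).finiteDimensional
  -- kernels of Lie-action operators
  have ker_mem : ∀ (z : L) (a : E),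
      a ∈ LinearMap.ker (LieModule.toEnd k L E z) ↔ ⁅z, a⁆ = 0 := by
    intro z a
    rw [LinearMap.mem_ker, LieModule.toEnd_apply_apply]
  -- the single-operator step via the core trace lemma
  have step_single : ∀ (n : ℕ), 1 ≤ n → ∀ (Fsub : Submodule k E),
      (∀ x : L, ∀ a ∈ Fsub, ⁅x, a⁆ ∈ Fsub) →
      Fsub ≤ (TanakaOuter.An mgr (n + 1) : Submodule k E) →
      ∀ (i : ℤ) (z : L), z ∈ TanakaOuter.Cg mgr n i →
      (∃ J : ℤ, ∀ j : ℤ, J ≤ j →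
        (Fsub ⊓ LinearMap.ker (LieModule.toEnd k L E z)) ⊓ W j = ⊥) →
      ∃ J : ℤ, ∀ j : ℤ, J ≤ j → Fsub ⊓ W j = ⊥ := by
    intro n hn Fsub hFlie hFA i z hz hTT
    by_cases hok : -(μ : ℤ) ≤ i ∧ i ≤ -((n : ℤ) + 1)
    case neg =>
      have hzbot : z = 0 := by
        have hCbot : TanakaOuter.Cg mgr n i = ⊥ := by
          push_neg at hok
          by_cases h1 : -(μ : ℤ) ≤ i
          · exact TanakaOuter.Cg_bot_high mgr μ hmneg n i (by omega)
          · rw [eq_bot_iff]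
            refine le_trans (TanakaOuter.Cg_le_mgr mgr hmbrk n i) ?_
            rw [hmneg i (Or.inr (by omega))]
        rw [hCbot] at hz
        simpa using hz
      obtain ⟨J, hJ⟩ := hTT
      refine ⟨J, fun j hj => ?_⟩
      have h5 := hJ j hj
      have h6 : LinearMap.ker (LieModule.toEnd k L E z) = ⊤ := by
        rw [eq_top_iff]
        intro a _
        rw [ker_mem, hzbot, zero_lie]
      rw [h6, inf_top_eq] at h5
      exact h5
    case pos =>
      set d : ℕ := (-i).toNat with hdd
      have hdi : (d : ℤ) = -i := by omega
      have hd0 : 0 < d := by omega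
      have hz1 : z ∈ Submodule.span k {w : L | ∃ p' ∈ Set.Icc (-(μ : ℤ)) (-1),
          ∃ q' ∈ Set.Icc (-(μ : ℤ)) (-1), p' + q' = i ∧
          ∃ x ∈ mgr p', ∃ y ∈ mgr q', w = ⁅x, y⁆} := by
        have h2 : z ∈ TanakaOuter.Cg mgr 1 i := TanakaOuter.Cg_le_of_le mgr hmbrk n 1 hn i hz
        refine TanakaOuter.Cg_succ_induction mgr 0 i h2
          (P := fun w => w ∈ Submodule.span k _) ?_ ?_ ?_ ?_
        · exact Submodule.zero_mem _
        · intro a b ha hb; exact Submodule.add_mem _ ha hb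
        · intro c' w hw; exact Submodule.smul_mem _ _ hw
        · intro p' x hx y hy
          by_cases hp' : -(μ : ℤ) ≤ p' ∧ p' ≤ -1
          · by_cases hq' : -(μ : ℤ) ≤ i - p' ∧ i - p' ≤ -1
            · apply Submodule.subset_span
              exact ⟨p', ⟨hp'.1, hp'.2⟩, i - p', ⟨hq'.1, hq'.2⟩, by ring, x, hx, y, hy, rfl⟩
            · have hy0 : y = 0 := by
                have hb : mgr (i - p') = ⊥ := by
                  apply hmneg
                  have hp2 := hp'.1
                  have hp3 := hp'.2
                  omega
                have hy2 : y ∈ mgr (i - p') := hy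
                rw [hb] at hy2
                simpa using hy2
              rw [hy0, lie_zero]
              exact Submodule.zero_mem _
          · have hx0 : x = 0 := by
              have hb : mgr p' = ⊥ := hmneg p' (by omega)
              have hx2 : x ∈ mgr p' := hx
              rw [hb] at hx2
              simpa using hx2
            rw [hx0, zero_lie]
            exact Submodule.zero_mem _
      rw [Submodule.mem_span_set'] at hz1
      obtain ⟨m, cf, g, hg⟩ := hz1
      have hgdata := fun t : Fin m => (g t).2
      choose pp hpp qq hqq hppqq xx hxx yy hyy hweq using hgdata
      obtain ⟨J, hJ⟩ := hTT
      refine TanakaAux.core W hWfin Fsub cf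
        (fun t => LieModule.toEnd k L E (xx t)) (fun t => LieModule.toEnd k L E (yy t))
        pp qq μ d hd0
        (fun t => (hpp t).1) (fun t => (hqq t).1) (fun t => le_trans (hqq t).2 (by omega))
        (fun t => by rw [hdi]; have := hppqq t; omega)
        ?_ ?_ ?_ ?_ (LieModule.toEnd k L E z) ?_ ?_ ?_ J ?_
      · -- hXW
        intro t j a ha
        rw [LieModule.toEnd_apply_apply]
        have := hact (pp t) j (xx t) (hxx t) a ha
        rwa [add_comm] at this
      · intro t j a ha
        rw [LieModule.toEnd_apply_apply]
        have := hact (qq t) j (yy t) (hyy t) a ha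
        rwa [add_comm] at this
      · intro t a ha
        rw [LieModule.toEnd_apply_apply]
        exact hFlie _ a ha
      · intro t a ha
        rw [LieModule.toEnd_apply_apply]
        exact hFlie _ a ha
      · -- hZdef
        intro a
        have hzn : LieModule.toEnd k L E z = ∑ t, cf t • LieModule.toEnd k L E ((g t : L)) := by
          rw [← hg]
          rw [show LieModule.toEnd k L E (∑ t, cf t • ((g t : L)))
              = ((LieModule.toEnd k L E : L →ₗ[k] Module.End k E)) (∑ t, cf t • ((g t : L))) from rfl]
          rw [map_sum]
          simp only [map_smul]
          rfl
        rw [hzn]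
        simp only [LinearMap.sum_apply, LinearMap.smul_apply, LieModule.toEnd_apply_apply]
        apply Finset.sum_congr rfl
        intro t _
        congr 1
        rw [hweq t]
        exact lie_lie (xx t) (yy t) a
      · -- hcommX
        intro t a ha
        simp only [LieModule.toEnd_apply_apply]
        have h7 : ⁅(⁅xx t, z⁆ : L), a⁆ = 0 := S1' n i (xx t) z hz a (hFA ha)
        have h8 : ⁅(⁅z, xx t⁆ : L), a⁆ = 0 := by
          have e : (⁅z, xx t⁆ : L) = -⁅xx t, z⁆ := (lie_skew z (xx t)).symm ▸ rfl
          rw [e, neg_lie, h7, neg_zero]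
        have h9 := leibniz_lie z (xx t) a
        rw [h8, zero_add] at h9
        exact h9
      · intro t a ha
        simp only [LieModule.toEnd_apply_apply]
        have h7 : ⁅(⁅yy t, z⁆ : L), a⁆ = 0 := S1' n i (yy t) z hz a (hFA ha)
        have h8 : ⁅(⁅z, yy t⁆ : L), a⁆ = 0 := by
          have e : (⁅z, yy t⁆ : L) = -⁅yy t, z⁆ := (lie_skew z (yy t)).symm ▸ rfl
          rw [e, neg_lie, h7, neg_zero]
        have h9 := leibniz_lie z (yy t) a
        rw [h8, zero_add] at h9
        exact h9
      · -- hker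
        intro j hj a ha hZa
        obtain ⟨haF, haW⟩ := Submodule.mem_inf.mp ha
        have hmem : a ∈ (Fsub ⊓ LinearMap.ker (LieModule.toEnd k L E z)) ⊓ W j := by
          refine Submodule.mem_inf.mpr ⟨Submodule.mem_inf.mpr ⟨haF, ?_⟩, haW⟩
          rw [LinearMap.mem_ker]
          exact hZa
        rw [hJ j hj] at hmem
        simpa using hmem
  -- joint kernels over a list
  have fold_mem : ∀ (l : List (L × ℤ)) (a : E),
      a ∈ l.foldr (fun zi acc => LinearMap.ker (LieModule.toEnd k L E zi.1) ⊓ acc)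
        (⊤ : Submodule k E) ↔ ∀ zi ∈ l, ⁅zi.1, a⁆ = 0 := by
    intro l a
    induction l with
    | nil => simp
    | cons zi l ih =>
      simp only [List.foldr_cons, Submodule.mem_inf, ih, List.mem_cons]
      constructor
      · rintro ⟨h1, h2⟩ w hw
        rcases hw with h | h
        · subst h; rw [← ker_mem]; exact h1
        · exact h2 w h
      · intro h
        exact ⟨(ker_mem _ _).mpr (h zi (Or.inl rfl)), fun w hw => h w (Or.inr hw)⟩
  -- list iteration of the single step
  have step_list : ∀ (n : ℕ), 1 ≤ n → ∀ (l : List (L × ℤ)),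
      (∀ zi ∈ l, zi.1 ∈ TanakaOuter.Cg mgr n zi.2) →
      (∃ J : ℤ, ∀ j : ℤ, J ≤ j → ((TanakaOuter.An mgr (n + 1) : Submodule k E) ⊓
        l.foldr (fun zi acc => LinearMap.ker (LieModule.toEnd k L E zi.1) ⊓ acc) ⊤) ⊓ W j = ⊥) →
      ∃ J : ℤ, ∀ j : ℤ, J ≤ j → (TanakaOuter.An mgr (n + 1) : Submodule k E) ⊓ W j = ⊥ := by
    intro n hn l
    induction l with
    | nil =>
      intro _ hTT
      obtain ⟨J, hJ⟩ := hTT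
      refine ⟨J, fun j hj => ?_⟩
      have := hJ j hj
      rwa [List.foldr_nil, inf_top_eq] at this
    | cons zi l ih =>
      intro hmem hTT
      apply ih (fun w hw => hmem w (List.mem_cons_of_mem _ hw))
      have hFlie : ∀ x : L, ∀ a ∈ ((TanakaOuter.An mgr (n + 1) : Submodule k E) ⊓
          l.foldr (fun zi acc => LinearMap.ker (LieModule.toEnd k L E zi.1) ⊓ acc) ⊤),
          ⁅x, a⁆ ∈ ((TanakaOuter.An mgr (n + 1) : Submodule k E) ⊓
          l.foldr (fun zi acc => LinearMap.ker (LieModule.toEnd k L E zi.1) ⊓ acc) ⊤) := by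
        intro x a ha
        obtain ⟨ha1, ha2⟩ := Submodule.mem_inf.mp ha
        refine Submodule.mem_inf.mpr ⟨AnLie (n + 1) x a ha1, ?_⟩
        rw [fold_mem] at ha2
        rw [fold_mem]
        intro w hw
        have hw1 : w.1 ∈ TanakaOuter.Cg mgr n w.2 := hmem w (List.mem_cons_of_mem _ hw)
        have h7 : ⁅(⁅x, w.1⁆ : L), a⁆ = 0 := S1' n w.2 x w.1 hw1 a ha1
        have h8 : ⁅(⁅w.1, x⁆ : L), a⁆ = 0 := by
          have e : (⁅w.1, x⁆ : L) = -⁅x, w.1⁆ := (lie_skew w.1 x).symm ▸ rfl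
          rw [e, neg_lie, h7, neg_zero]
        have h9 := leibniz_lie w.1 x a
        rw [h8, zero_add, ha2 w hw, lie_zero] at h9
        exact h9
      apply step_single n hn _ hFlie inf_le_left zi.2 zi.1 (hmem zi List.mem_cons_self)
      obtain ⟨J, hJ⟩ := hTT
      refine ⟨J, fun j hj => ?_⟩
      rw [← hJ j hj]
      congr 1
      rw [List.foldr_cons]
      rw [inf_assoc]
      congr 1
      rw [inf_comm]
  -- spanning lists for Cg n and the induction over n
  have TTstep : ∀ n : ℕ, 1 ≤ n →
      (∃ J : ℤ, ∀ j : ℤ, J ≤ j → (TanakaOuter.An mgr n : Submodule k E) ⊓ W j = ⊥) →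
      (∃ J : ℤ, ∀ j : ℤ, J ≤ j → (TanakaOuter.An mgr (n + 1) : Submodule k E) ⊓ W j = ⊥) := by
    intro n hn hTTn
    have hFG : ∀ i : ℤ, ∃ S : Finset L,
        Submodule.span k (↑S : Set L) = TanakaOuter.Cg mgr n i :=
      fun i => IsNoetherian.noetherian _
    choose Sf hSf using hFG
    set s : Finset (L × ℤ) := (Finset.Icc (-(μ : ℤ)) (-((n : ℤ) + 1))).biUnion
      (fun i => (Sf i).image (fun zz => (zz, i))) with hs
    have hsmem : ∀ zi ∈ s.toList, zi.1 ∈ TanakaOuter.Cg mgr n zi.2 := by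
      intro zi hzi
      rw [Finset.mem_toList] at hzi
      rw [hs, Finset.mem_biUnion] at hzi
      obtain ⟨i, hi, hzi2⟩ := hzi
      rw [Finset.mem_image] at hzi2
      obtain ⟨zz, hzz, heq⟩ := hzi2
      cases heq
      exact (hSf i) ▸ Submodule.subset_span hzz
    apply step_list n hn s.toList hsmem
    obtain ⟨J, hJ⟩ := hTTn
    refine ⟨J, fun j hj => ?_⟩
    rw [← le_bot_iff, ← hJ j hj]
    apply inf_le_inf_right
    intro a ha
    obtain ⟨ha1, ha2⟩ := Submodule.mem_inf.mp ha
    rw [fold_mem] at ha2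
    intro i z hz
    by_cases hi : i ∈ Finset.Icc (-(μ : ℤ)) (-((n : ℤ) + 1))
    · have hz2 : z ∈ Submodule.span k (↑(Sf i) : Set L) := by rw [hSf i]; exact hz
      refine Submodule.span_induction (p := fun w _ => ⁅w, a⁆ = 0) ?_ ?_ ?_ ?_ hz2
      · intro w hw
        apply ha2 (w, i)
        rw [Finset.mem_toList, hs, Finset.mem_biUnion]
        exact ⟨i, hi, Finset.mem_image.mpr ⟨w, hw, rfl⟩⟩
      · simp
      · intro u v _ _ hu hv; rw [add_lie, hu, hv, add_zero]
      · intro c' w _ hw; rw [smul_lie, hw, smul_zero]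
    · have hbot : TanakaOuter.Cg mgr n i = ⊥ := by
        rw [Finset.mem_Icc] at hi
        push_neg at hi
        by_cases h1 : -(μ : ℤ) ≤ i
        · exact TanakaOuter.Cg_bot_high mgr μ hmneg n i (by have := hi h1; omega)
        · rw [eq_bot_iff]
          refine le_trans (TanakaOuter.Cg_le_mgr mgr hmbrk n i) ?_
          rw [hmneg i (Or.inr (by omega))]
      rw [hbot] at hz
      simp only [Submodule.mem_bot] at hz
      simp [hz]
  have hTT1 : ∃ J : ℤ, ∀ j : ℤ, J ≤ j → (TanakaOuter.An mgr 1 : Submodule k E) ⊓ W j = ⊥ := by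
    apply fin_TT
    rw [An1]
    exact hfin
  have hTTμ : ∃ J : ℤ, ∀ j : ℤ, J ≤ j → (TanakaOuter.An mgr μ : Submodule k E) ⊓ W j = ⊥ := by
    have hμ1 : 1 ≤ μ := by omega
    exact Nat.le_induction hTT1 (fun n hn ih => TTstep n hn ih) μ hμ1
  apply TTtop
  obtain ⟨J, hJ⟩ := hTTμ
  exact ⟨J, fun j hj => by rw [← Anμtop]; exact hJ j hj⟩
end

section
/- Let V be a finite-dimensional complex vector space and A ⊆ End(V) a linear subspace containing no endomorphism of rank 1. Then the full Spencer–Sternberg prolongation prol(A) = ⊕_{k≥0} A_k is finite-dimensional, where A_1 = {T ∈ S^2(V*) ⊗ V : T(v, ·) ∈ A for all v ∈ V} is the first prolongation and A_k denotes the k-th prolongation. -/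
/-- Membership in the `n`-th Spencer–Sternberg prolongation `A_n ⊆ S^{n+1}(V*) ⊗ V`
of a subspace `A ⊆ End(V)`: a symmetric `(n+1)`-multilinear map `T : V^{n+1} → V`
all of whose `n`-fold partial evaluations, as endomorphisms of `V`, lie in `A`. -/
def IsProlongation {k V W : Type*} [Field k] [AddCommGroup V] [Module k V]
    [AddCommGroup W] [Module k W] (A : Set (V →ₗ[k] W)) (n : ℕ)
    (T : MultilinearMap k (fun _ : Fin (n + 1) => V) W) : Prop :=
  (∀ (σ : Equiv.Perm (Fin (n + 1))) (v : Fin (n + 1) → V), T (v ∘ σ) = T v) ∧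
  (∀ v : Fin n → V, T.toLinearMap (Fin.snoc v 0) (Fin.last n) ∈ A)

open MvPolynomial

noncomputable section SpencerAux

def mult {k m : ℕ} (j : Fin k → Fin m) : Fin m →₀ ℕ := ∑ i, Finsupp.single (j i) 1

lemma card_fiber {k m : ℕ} (j : Fin k → Fin m) (v : Fin m) :
    Fintype.card {i // j i = v} = mult j v := by
  simp [mult, Finsupp.finset_sum_apply, Finsupp.single_apply, Fintype.card_subtype]

lemma exists_perm_of_mult_eq {k m : ℕ} {j₁ j₂ : Fin k → Fin m} (h : mult j₁ = mult j₂) :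
    ∃ σ : Equiv.Perm (Fin k), j₂ ∘ σ = j₁ := by
  have e : ∀ v : Fin m, {i // j₁ i = v} ≃ {i // j₂ i = v} := fun v =>
    Fintype.equivOfCardEq (by rw [card_fiber, card_fiber, h])
  exact ⟨Equiv.ofFiberEquiv e, funext fun i => Equiv.ofFiberEquiv_map e i⟩

lemma mult_comp_equiv {k m : ℕ} (j : Fin k → Fin m) (σ : Equiv.Perm (Fin k)) :
    mult (j ∘ σ) = mult j := by
  simp only [mult]
  exact Equiv.sum_comp σ (fun i => Finsupp.single (j i) 1)

lemma mult_snoc {k m : ℕ} (j : Fin k → Fin m) (x : Fin m) :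
    mult (Fin.snoc j x) = mult j + Finsupp.single x 1 := by
  simp only [mult, Fin.sum_univ_castSucc, Fin.snoc_castSucc, Fin.snoc_last]

lemma sum_mult {k m : ℕ} (j : Fin k → Fin m) : ∑ v, mult j v = k := by
  simp only [mult, Finsupp.finset_sum_apply]
  rw [Finset.sum_comm]
  simp [Finsupp.single_apply]

lemma exists_snoc_of_mem {n m : ℕ} (j' : Fin (n + 1) → Fin m) (x : Fin m)
    (hx : ∃ k, j' k = x) : ∃ v : Fin n → Fin m, mult (Fin.snoc v x) = mult j' := by
  obtain ⟨k, hk⟩ := hx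
  set σ : Equiv.Perm (Fin (n + 1)) := Equiv.swap k (Fin.last n) with hσ
  refine ⟨(j' ∘ σ) ∘ Fin.castSucc, ?_⟩
  have h1 : Fin.snoc ((j' ∘ σ) ∘ Fin.castSucc) x = j' ∘ σ := by
    funext i
    refine Fin.lastCases ?_ (fun i => ?_) i
    · rw [Fin.snoc_last]
      simp [hσ, Equiv.swap_apply_right, hk]
    · rw [Fin.snoc_castSucc]; rfl
  rw [h1, mult_comp_equiv]

variable {V : Type*} [AddCommGroup V] [Module ℂ V] {m : ℕ} (b : Module.Basis (Fin m) ℂ V)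

def Eij (i j : Fin m) : V →ₗ[ℂ] V := (b.coord j).smulRight (b i)

lemma Eij_apply (i j : Fin m) (u : V) : Eij b i j u = (b.repr u j) • b i := rfl

lemma endo_decomp (a : V →ₗ[ℂ] V) :
    a = ∑ i, ∑ j, (b.repr (a (b j)) i) • Eij b i j := by
  refine b.ext fun j₀ => ?_
  rw [Finset.sum_comm]
  simp only [LinearMap.sum_apply, LinearMap.smul_apply, Eij_apply, Module.Basis.repr_self,
    Finsupp.single_apply]
  rw [Finset.sum_eq_single j₀ (fun j _ hj => by simp [Finsupp.single_apply, hj, Ne.symm hj])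
    (by simp)]
  simp only [if_pos trivial, one_smul]
  exact (b.sum_repr (a (b j₀))).symm

lemma dual_apply_endo (L : Module.Dual ℂ (V →ₗ[ℂ] V)) (a : V →ₗ[ℂ] V) :
    L a = ∑ i, ∑ j, (b.repr (a (b j)) i) * L (Eij b i j) := by
  conv_lhs => rw [endo_decomp b a]
  simp [map_sum, map_smul]

/-- The symbol of a dual functional, a vector of linear polynomials. -/
def sigL (L : Module.Dual ℂ (V →ₗ[ℂ] V)) : Fin m → MvPolynomial (Fin m) ℂ :=
  fun i => ∑ j, (L (Eij b i j)) • X j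

lemma key_lemma (A : Submodule ℂ (V →ₗ[ℂ] V)) (n : ℕ)
    (T : MultilinearMap ℂ (fun _ : Fin (n + 1) => V) V)
    (hT : IsProlongation (A : Set (V →ₗ[ℂ] V)) n T) (hT0 : T ≠ 0) :
    ∃ (i₀ : Fin m) (α₀ : Fin m →₀ ℕ), (∑ v, α₀ v = n + 1) ∧
      Pi.single i₀ (monomial α₀ (1 : ℂ)) ∉
        Submodule.span (MvPolynomial (Fin m) ℂ)
          ((fun L => sigL b L) '' (A.dualAnnihilator : Set _)) := by
  obtain ⟨hsym, hmem⟩ := hT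
  set R' := MvPolynomial (Fin m) ℂ
  set t : Fin m → (Fin (n + 1) → Fin m) → ℂ :=
    fun i j => b.repr (T (fun k => b (j k))) i with ht
  have t_eq : ∀ (i : Fin m) (j₁ j₂ : Fin (n + 1) → Fin m), mult j₁ = mult j₂ →
      t i j₁ = t i j₂ := by
    intro i j₁ j₂ h
    obtain ⟨σ, hσ⟩ := exists_perm_of_mult_eq h
    have : (fun k => b (j₁ k)) = (fun k => b (j₂ k)) ∘ σ := by
      funext k; simp [← congrFun hσ k, Function.comp]
    simp only [ht, this, hsym σ (fun k => b (j₂ k))]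
  classical
  set c : Fin m → (Fin m →₀ ℕ) → ℂ := fun i α =>
    if h : ∃ j : Fin (n + 1) → Fin m, mult j = α then t i h.choose else 0 with hc
  have c_eq : ∀ (i : Fin m) (j : Fin (n + 1) → Fin m), c i (mult j) = t i j := by
    intro i j
    have hex : ∃ j' : Fin (n + 1) → Fin m, mult j' = mult j := ⟨j, rfl⟩
    simp only [hc, dif_pos hex]
    exact t_eq i _ j hex.choose_spec
  set φ : (Fin m → R') → ℂ :=
    fun x => ∑ i, Finsupp.linearCombination ℂ (c i) (AddMonoidAlgebra.coeff (x i)) with hφ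
  have φ_add : ∀ x y, φ (x + y) = φ x + φ y := by
    intro x y
    simp only [hφ, Pi.add_apply, AddMonoidAlgebra.coeff_add, map_add, Finset.sum_add_distrib]
    rw [← Finset.sum_add_distrib]; exact Finset.sum_congr rfl fun i _ => map_add _ _ _
  have φ_single : ∀ (i₀ : Fin m) (α : Fin m →₀ ℕ) (r : ℂ),
      φ (Pi.single i₀ (monomial α r)) = r * c i₀ α := by
    intro i₀ α r
    simp only [hφ]
    rw [Finset.sum_eq_single i₀ (fun i _ hi => by rw [Pi.single_eq_of_ne hi]; exact map_zero _)
      (by simp)]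
    rw [Pi.single_eq_same,
      show AddMonoidAlgebra.coeff (monomial α r : R') = Finsupp.single α r from rfl,
      Finsupp.linearCombination_single, smul_eq_mul]
  -- the PDE satisfied by T
  have key0 : ∀ (v : Fin n → Fin m) (L : Module.Dual ℂ (V →ₗ[ℂ] V)),
      L ∈ A.dualAnnihilator → ∑ i, ∑ j, t i (Fin.snoc v j) * L (Eij b i j) = 0 := by
    intro v L hL
    set a : V →ₗ[ℂ] V := T.toLinearMap (Fin.snoc (fun k => b (v k)) 0) (Fin.last n) with ha
    have haA : a ∈ A := hmem _
    have hLa : L a = 0 := (Submodule.mem_dualAnnihilator L).mp hL a haA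
    rw [dual_apply_endo b L a] at hLa
    rw [← hLa]
    refine Finset.sum_congr rfl fun i _ => Finset.sum_congr rfl fun j _ => ?_
    congr 1
    have harg : (fun k => b ((Fin.snoc v j : Fin (n+1) → Fin m) k)) = Fin.snoc (fun k => b (v k)) (b j) := by
      funext k
      refine Fin.lastCases ?_ (fun k => ?_) k
      · rw [Fin.snoc_last, Fin.snoc_last]
      · rw [Fin.snoc_castSucc, Fin.snoc_castSucc]
    simp only [ht, ha, MultilinearMap.toLinearMap_apply, Fin.update_snoc_last, harg]
  -- φ vanishes on all multiples of the symbols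
  have gen_vanish : ∀ (f : R') (L : Module.Dual ℂ (V →ₗ[ℂ] V)),
      L ∈ A.dualAnnihilator → φ (f • sigL b L) = 0 := by
    intro f L hL
    induction f using MvPolynomial.induction_on' with
    | add p q hp hq =>
      have : (p + q) • sigL b L = p • sigL b L + q • sigL b L := add_smul _ _ _
      rw [this, φ_add, hp, hq, add_zero]
    | monomial β r =>
      have expand : (monomial β r : R') • sigL b L =
          fun i => ∑ j, (L (Eij b i j)) • (monomial (β + Finsupp.single j 1) r : R') := by
        funext i
        simp only [Pi.smul_apply, sigL, smul_eq_mul, Finset.mul_sum]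
        refine Finset.sum_congr rfl fun j _ => ?_
        rw [mul_smul_comm]
        congr 1
        rw [monomial_add_single, pow_one]
      rw [expand]
      have hval : φ (fun i => ∑ j, (L (Eij b i j)) • (monomial (β + Finsupp.single j 1) r : R'))
          = ∑ i, ∑ j, (L (Eij b i j)) * (r * c i (β + Finsupp.single j 1)) := by
        simp only [hφ, AddMonoidAlgebra.coeff_sum, AddMonoidAlgebra.coeff_smul, map_sum, map_smul, smul_eq_mul]
        simp only [show ∀ i, AddMonoidAlgebra.coeff (∑ j, (L (Eij b i j)) • (monomial (β + Finsupp.single j 1) r : R')) = ∑ j, (L (Eij b i j)) • AddMonoidAlgebra.coeff (monomial (β + Finsupp.single j 1) r : R') from fun i => map_sum (AddMonoidAlgebra.coeffAddEquiv (R := ℂ) (M := Fin m →₀ ℕ)) _ _, map_sum, map_smul, smul_eq_mul]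
        refine Finset.sum_congr rfl fun i _ => Finset.sum_congr rfl fun j _ => ?_
        congr 1
        rw [show AddMonoidAlgebra.coeff (monomial (β + Finsupp.single j 1) r : R')
            = Finsupp.single (β + Finsupp.single j 1) r from rfl,
          Finsupp.linearCombination_single, smul_eq_mul]
      rw [hval]
      by_cases hv : ∃ v : Fin n → Fin m, mult v = β
      · obtain ⟨v, hvβ⟩ := hv
        have hcv : ∀ (i : Fin m) (j : Fin m),
            c i (β + Finsupp.single j 1) = t i (Fin.snoc v j) := by
          intro i j
          rw [← hvβ, ← mult_snoc, c_eq]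
        calc ∑ i, ∑ j, (L (Eij b i j)) * (r * c i (β + Finsupp.single j 1))
            = r * ∑ i, ∑ j, t i (Fin.snoc v j) * L (Eij b i j) := by
              rw [Finset.mul_sum]
              refine Finset.sum_congr rfl fun i _ => ?_
              rw [Finset.mul_sum]
              refine Finset.sum_congr rfl fun j _ => ?_
              rw [hcv]; ring
          _ = 0 := by rw [key0 v L hL, mul_zero]
      · have hcv : ∀ (i : Fin m) (j : Fin m), c i (β + Finsupp.single j 1) = 0 := by
          intro i j
          have hne : ¬ ∃ j' : Fin (n + 1) → Fin m, mult j' = β + Finsupp.single j 1 := by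
            rintro ⟨j', hj'⟩
            have hcard : 0 < Fintype.card {k // j' k = j} := by
              rw [card_fiber, hj']
              simp
            obtain ⟨⟨k, hk⟩⟩ := Fintype.card_pos_iff.mp hcard
            obtain ⟨v, hv'⟩ := exists_snoc_of_mem j' j ⟨k, hk⟩
            rw [hj', mult_snoc] at hv'
            exact hv ⟨v, add_right_cancel hv'⟩
          simp only [hc, dif_neg hne]
        simp [hcv]
  -- φ vanishes on the span
  have span_vanish : ∀ x ∈ Submodule.span (MvPolynomial (Fin m) ℂ)
      ((fun L => sigL b L) '' (A.dualAnnihilator : Set _)), φ x = 0 := by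
    intro x hx
    set Z : Submodule R' (Fin m → R') :=
      { carrier := {x | ∀ f : R', φ (f • x) = 0}
        add_mem' := by
          intro x y hx hy f
          rw [smul_add, φ_add, hx f, hy f, add_zero]
        zero_mem' := by
          intro f
          rw [smul_zero]
          have h0 : φ 0 = 0 := by simp [hφ]
          exact h0
        smul_mem' := by
          intro r x hx f
          rw [smul_smul]
          exact hx (f * r) } with hZ
    have hxZ : x ∈ Z := by
      refine Submodule.span_le.mpr ?_ hx
      rintro _ ⟨L, hL, rfl⟩
      intro f
      exact gen_vanish f L hL
    simpa using hxZ (1 : R')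
  -- existence of a nonzero coefficient
  have hj₀ : ∃ j₀ : Fin (n + 1) → Fin m, T (fun k => b (j₀ k)) ≠ 0 := by
    by_contra h
    push_neg at h
    exact hT0 (Module.Basis.ext_multilinear (fun _ => b) fun v => by rw [h v]; rfl)
  obtain ⟨j₀, hj₀⟩ := hj₀
  have hrepr : b.repr (T (fun k => b (j₀ k))) ≠ 0 := fun hh =>
    hj₀ ((LinearEquiv.map_eq_zero_iff b.repr).mp hh)
  obtain ⟨i₀, hi₀⟩ : ∃ i₀, b.repr (T (fun k => b (j₀ k))) i₀ ≠ 0 := by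
    by_contra h
    push_neg at h
    exact hrepr (Finsupp.ext h)
  refine ⟨i₀, mult j₀, sum_mult j₀, fun hmem' => ?_⟩
  have := span_vanish _ hmem'
  rw [φ_single, one_mul, c_eq] at this
  exact hi₀ this

end SpencerAux


open MvPolynomial in
set_option maxHeartbeats 1000000 in
set_option synthInstance.maxHeartbeats 80000 in
/-- Spencer's criterion, one direction: Let `V` be a finite-dimensional
complex vector space and `A ⊆ End(V)` a subspace containing no endomorphism of
rank `1`.  Then `A` is of finite type: the prolongations `A_n` vanish for all
sufficiently large `n`, so the full prolongation `prol(A) = ⊕ A_n` is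
finite-dimensional. -/
theorem stmt7 (V : Type*) [AddCommGroup V] [Module ℂ V] [FiniteDimensional ℂ V]
    (A : Submodule ℂ (V →ₗ[ℂ] V))
    (hrk : ¬ ∃ a ∈ A, Module.finrank ℂ (LinearMap.range a) = 1) :
    ∃ N : ℕ, ∀ n : ℕ, N ≤ n → ∀ T : MultilinearMap ℂ (fun _ : Fin (n + 1) => V) V,
      IsProlongation (A : Set (V →ₗ[ℂ] V)) n T → T = 0 := by
  classical
  by_contra hcon
  push_neg at hcon
  set m := Module.finrank ℂ V with hm
  set b : Module.Basis (Fin m) ℂ V := Module.finBasis ℂ V with hb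
  set K : Submodule (MvPolynomial (Fin m) ℂ) (Fin m → MvPolynomial (Fin m) ℂ) :=
    Submodule.span (MvPolynomial (Fin m) ℂ) ((fun L => sigL b L) '' (A.dualAnnihilator : Set _)) with hK
  set Ann : Ideal (MvPolynomial (Fin m) ℂ) := K.colon ⊤ with hAnn
  have key : ∀ N : ℕ, ∃ n, N ≤ n ∧ ∃ (i₀ : Fin m) (α₀ : Fin m →₀ ℕ),
      (∑ v, α₀ v = n + 1) ∧ Pi.single i₀ (monomial α₀ (1 : ℂ)) ∉ K := by
    intro N
    obtain ⟨n, hn, T, hT, hT0⟩ := hcon N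
    obtain ⟨i₀, α₀, h1, h2⟩ := key_lemma b A n T hT hT0
    exact ⟨n, hn, i₀, α₀, h1, h2⟩
  -- Step 1: find a nonzero common zero of the annihilator ideal
  have hξ : ∃ ξ : Fin m → ℂ, ξ ≠ 0 ∧ ∀ p ∈ Ann, eval ξ p = 0 := by
    by_contra hno
    push_neg at hno
    have hZL : MvPolynomial.zeroLocus ℂ Ann ⊆ {(0 : Fin m → ℂ)} := by
      intro ξ hξ'
      by_contra h0
      obtain ⟨p, hp, hev⟩ := hno ξ h0
      exact hev (hξ' p hp)
    have hX : ∀ k : Fin m, ∃ s : ℕ, (X k : MvPolynomial (Fin m) ℂ) ^ s ∈ Ann := by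
      intro k
      have hmemV : (X k : MvPolynomial (Fin m) ℂ) ∈ vanishingIdeal ℂ (zeroLocus ℂ Ann) := by
        intro x hx
        have hx0 : x = 0 := hZL hx
        simp [hx0]
      rw [vanishingIdeal_zeroLocus_eq_radical] at hmemV
      exact Ideal.mem_radical_iff.mp hmemV
    choose s hs using hX
    obtain ⟨n, hn, i₀, α₀, hsum, hnotK⟩ := key (∑ k, s k)
    have hk : ∃ k, s k ≤ α₀ k := by
      by_contra h
      push_neg at h
      have h1 : ∑ v, (α₀ v + 1) ≤ ∑ k, s k := Finset.sum_le_sum (fun k _ => h k)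
      rw [Finset.sum_add_distrib, hsum] at h1
      simp only [Finset.sum_const, Finset.card_univ, Fintype.card_fin, smul_eq_mul,
        mul_one] at h1
      omega
    obtain ⟨k, hsk⟩ := hk
    apply hnotK
    have heq : Pi.single i₀ (monomial α₀ (1 : ℂ)) =
        ((X k : MvPolynomial (Fin m) ℂ) ^ (s k)) •
          (Pi.single i₀ (monomial (α₀ - Finsupp.single k (s k)) (1 : ℂ)) :
            Fin m → MvPolynomial (Fin m) ℂ) := by
      funext i
      by_cases hi : i = i₀
      · subst hi
        rw [Pi.smul_apply, Pi.single_eq_same, Pi.single_eq_same, smul_eq_mul,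
          X_pow_eq_monomial, monomial_mul, one_mul]
        congr 1
        rw [add_tsub_cancel_of_le (Finsupp.single_le_iff.mpr hsk)]
      · rw [Pi.smul_apply, Pi.single_eq_of_ne hi, Pi.single_eq_of_ne hi, smul_zero]
    rw [heq]
    exact Submodule.mem_colon.mp (hs k) _ trivial
  obtain ⟨ξ, hξ0, hξA⟩ := hξ
  -- Step 2: the span of the evaluated symbols is a proper subspace
  set Eξ : Submodule ℂ (Fin m → ℂ) :=
    Submodule.span ℂ ((fun L => fun i => eval ξ (sigL b L i)) ''
      (A.dualAnnihilator : Set _)) with hEξ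
  have hEξ_ne_top : Eξ ≠ ⊤ := by
    intro htop
    have lift : ∀ u ∈ Eξ, ∃ Y ∈ K, ∀ i, eval ξ (Y i) = u i := by
      intro u hu
      induction hu using Submodule.span_induction with
      | mem z hz =>
        obtain ⟨L, hL, rfl⟩ := hz
        exact ⟨sigL b L, Submodule.subset_span ⟨L, hL, rfl⟩, fun i => rfl⟩
      | zero => exact ⟨0, zero_mem K, fun i => by simp⟩
      | add x y hx' hy' hx hy =>
        obtain ⟨Y1, h1, e1⟩ := hx
        obtain ⟨Y2, h2, e2⟩ := hy
        exact ⟨Y1 + Y2, add_mem h1 h2, fun i => by simp [e1 i, e2 i]⟩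
      | smul a x hx' hx =>
        obtain ⟨Y, h1, e1⟩ := hx
        refine ⟨(C a : MvPolynomial (Fin m) ℂ) • Y, Submodule.smul_mem K _ h1, fun i => ?_⟩
        simp [e1 i, Algebra.smul_def]
    set mξ : Ideal (MvPolynomial (Fin m) ℂ) := RingHom.ker (eval ξ : MvPolynomial (Fin m) ℂ →+* ℂ) with hmξ
    have hcomp : ∀ z : Fin m → MvPolynomial (Fin m) ℂ, (∀ j, eval ξ (z j) = 0) →
        z ∈ mξ • (⊤ : Submodule (MvPolynomial (Fin m) ℂ) (Fin m → MvPolynomial (Fin m) ℂ)) := by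
      intro z hz
      rw [← Finset.univ_sum_single z]
      refine Submodule.sum_mem _ fun j _ => ?_
      have hzj : Pi.single j (z j) = (z j) •
          (Pi.single j (1 : MvPolynomial (Fin m) ℂ) : Fin m → MvPolynomial (Fin m) ℂ) := by
        funext i
        by_cases hi : i = j
        · subst hi; simp
        · simp [Pi.single_eq_of_ne hi]
      rw [hzj]
      exact Submodule.smul_mem_smul (by simpa [hmξ, RingHom.mem_ker] using hz j)
        Submodule.mem_top
    have hsup : (⊤ : Submodule (MvPolynomial (Fin m) ℂ) (Fin m → MvPolynomial (Fin m) ℂ)) ≤ K ⊔ (mξ • ⊤) := by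
      intro x _
      rw [← Finset.univ_sum_single x]
      refine Submodule.sum_mem _ fun i _ => ?_
      obtain ⟨Y, hY, hYe⟩ := lift (Pi.single i 1) (htop ▸ Submodule.mem_top)
      set v : ℂ := eval ξ (x i) with hv
      set ei : Fin m → MvPolynomial (Fin m) ℂ := Pi.single i (1 : MvPolynomial (Fin m) ℂ) with hei
      have hone : Pi.single i (x i) = (x i) • ei := by
        funext i'
        by_cases hi : i' = i
        · subst hi; simp [hei]
        · simp [hei, Pi.single_eq_of_ne hi]
      have hdec : (x i) • ei = (x i - C v) • ei +
          ((C v : MvPolynomial (Fin m) ℂ) • (ei - Y) + (C v : MvPolynomial (Fin m) ℂ) • Y) := by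
        rw [← smul_add, sub_add_cancel, ← add_smul, sub_add_cancel]
      rw [hone, hdec]
      refine Submodule.add_mem _ (Submodule.mem_sup_right ?_) (Submodule.add_mem _
        (Submodule.mem_sup_right ?_) (Submodule.mem_sup_left (Submodule.smul_mem K _ hY)))
      · exact Submodule.smul_mem_smul (by simp [hmξ, RingHom.mem_ker, map_sub, eval_C, hv]) Submodule.mem_top
      · exact Submodule.smul_mem _ _ (hcomp _ (fun j => by
          have := hYe j
          by_cases hj : j = i
          · subst hj; simp [hei, this]
          · simp [hei, Pi.single_eq_of_ne hj, this]))
    -- push to the quotient and apply Nakayama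
    have hfg : (⊤ : Submodule (MvPolynomial (Fin m) ℂ) ((Fin m → MvPolynomial (Fin m) ℂ) ⧸ K)).FG := Module.Finite.fg_top
    have hle : (⊤ : Submodule (MvPolynomial (Fin m) ℂ) ((Fin m → MvPolynomial (Fin m) ℂ) ⧸ K)) ≤ mξ • ⊤ := by
      have h1 : Submodule.map K.mkQ ⊤ = ⊤ := by
        rw [Submodule.map_top, Submodule.range_mkQ]
      calc (⊤ : Submodule (MvPolynomial (Fin m) ℂ) ((Fin m → MvPolynomial (Fin m) ℂ) ⧸ K)) = Submodule.map K.mkQ ⊤ := h1.symm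
        _ ≤ Submodule.map K.mkQ (K ⊔ mξ • ⊤) := Submodule.map_mono hsup
        _ = Submodule.map K.mkQ K ⊔ Submodule.map K.mkQ (mξ • ⊤) := Submodule.map_sup _ _ _
        _ = ⊥ ⊔ mξ • Submodule.map K.mkQ ⊤ := by rw [Submodule.mkQ_map_self, Submodule.map_smul'']
        _ = mξ • ⊤ := by rw [bot_sup_eq, h1]
    obtain ⟨r, hr1, hr0⟩ :=
      Submodule.exists_sub_one_mem_and_smul_eq_zero_of_fg_of_le_smul mξ ⊤ hfg hle
    have hrAnn : r ∈ Ann := by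
      rw [hAnn, Submodule.mem_colon]
      intro p _
      have hq : K.mkQ (r • p) = 0 := by
        rw [map_smul]
        exact hr0 _ Submodule.mem_top
      rwa [Submodule.mkQ_apply, Submodule.Quotient.mk_eq_zero] at hq
    have he1 : eval ξ r = 0 := hξA r hrAnn
    have he2 : eval ξ (r - 1) = 0 := by simpa [hmξ, RingHom.mem_ker] using hr1
    rw [map_sub, map_one, he1] at he2
    norm_num at he2
  -- Step 3: extract the rank-one element
  obtain ⟨g, hg0, hgE⟩ := Submodule.exists_dual_map_eq_bot_of_lt_top
    (lt_top_iff_ne_top.mpr hEξ_ne_top) inferInstance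
  have hgE' : ∀ u ∈ Eξ, g u = 0 := by
    intro u hu
    have : g u ∈ Submodule.map g Eξ := ⟨u, hu, rfl⟩
    rwa [hgE, Submodule.mem_bot] at this
  set w : Fin m → ℂ := fun i => g (Pi.single i 1) with hw
  have hgu : ∀ u : Fin m → ℂ, g u = ∑ i, u i * w i := by
    intro u
    conv_lhs => rw [← Finset.univ_sum_single u]
    rw [map_sum]
    refine Finset.sum_congr rfl fun i _ => ?_
    have h1 : Pi.single i (u i) = (u i) • (Pi.single i (1 : ℂ) : Fin m → ℂ) := by
      funext i'
      by_cases hi : i' = i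
      · subst hi; simp
      · simp [Pi.single_eq_of_ne hi]
    rw [h1, map_smul, smul_eq_mul]
  have hw0 : w ≠ 0 := by
    intro h
    apply hg0
    apply LinearMap.ext
    intro u
    rw [hgu, h]
    simp
  set w' : V := b.equivFun.symm w with hw'
  have hw'0 : w' ≠ 0 := fun h => hw0 ((LinearEquiv.map_eq_zero_iff b.equivFun.symm).mp h)
  have hw'sum : w' = ∑ i, w i • b i := b.equivFun_symm_apply w
  set a : V →ₗ[ℂ] V := ∑ i, ∑ j, (w i * ξ j) • Eij b i j with haa
  have ha_apply : ∀ u : V, a u = (∑ j, ξ j * b.repr u j) • w' := by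
    intro u
    simp only [haa, LinearMap.sum_apply, LinearMap.smul_apply, Eij_apply, smul_smul]
    rw [hw'sum, Finset.smul_sum]
    refine Finset.sum_congr rfl fun i _ => ?_
    rw [smul_smul, ← Finset.sum_smul]
    congr 1
    rw [Finset.sum_mul]
    exact Finset.sum_congr rfl fun j _ => by ring
  have haA : a ∈ A := by
    rw [← Subspace.forall_mem_dualAnnihilator_apply_eq_zero_iff A a]
    intro L hL
    have hLa : L a = ∑ i, ∑ j, (w i * ξ j) * L (Eij b i j) := by
      simp [haa, map_sum, map_smul]
    have hu : (fun i => eval ξ (sigL b L i)) ∈ Eξ := Submodule.subset_span ⟨L, hL, rfl⟩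
    have hg' := hgE' _ hu
    rw [hgu] at hg'
    have hev : ∀ i, eval ξ (sigL b L i) = ∑ j, L (Eij b i j) * ξ j := by
      intro i
      rw [sigL, map_sum]
      refine Finset.sum_congr rfl fun j _ => ?_
      rw [MvPolynomial.smul_eval, eval_X]
    rw [hLa, ← hg']
    refine Finset.sum_congr rfl fun i _ => ?_
    rw [hev, Finset.sum_mul]
    refine Finset.sum_congr rfl fun j _ => ?_
    ring
  have hrange : LinearMap.range a = Submodule.span ℂ {w'} := by
    apply le_antisymm
    · rintro _ ⟨u, rfl⟩
      rw [ha_apply]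
      exact Submodule.smul_mem _ _ (Submodule.mem_span_singleton_self w')
    · rw [Submodule.span_singleton_le_iff_mem]
      obtain ⟨j₁, hj₁⟩ : ∃ j₁, ξ j₁ ≠ 0 := by
        by_contra h
        push_neg at h
        exact hξ0 (funext h)
      refine ⟨(ξ j₁)⁻¹ • b j₁, ?_⟩
      rw [map_smul, ha_apply]
      simp only [Module.Basis.repr_self, Finsupp.single_apply]
      rw [Finset.sum_eq_single j₁ (fun j _ hj => by simp [Ne.symm hj]) (by simp)]
      rw [smul_smul]
      rw [if_pos rfl, mul_one, inv_mul_cancel₀ hj₁, one_smul]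
  refine hrk ⟨a, haA, ?_⟩
  rw [hrange]
  exact finrank_span_singleton hw'0
end

section
/- Let (V, ω) be a symplectic vector space and U ⊆ V a subspace, and let W ⊆ U be a hyperplane in U (codimension 1). Let K = ker(ω|_U) and A = K ∩ W, E = ker(ω|_W). Then either A = E (which happens exactly when K is not contained in W, i.e., K is transversal to W in U), or A ⊊ E and dim E − dim A = 1. -/
/-- The kernel of the restriction of a bilinear form `ω` on `V` to a subspace `S`:
`{v ∈ S : ω(v, s) = 0 for all s ∈ S}`. -/
def restKer {V : Type*} [AddCommGroup V] [Module ℝ V]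
    (ω : LinearMap.BilinForm ℝ V) (S : Submodule ℝ V) : Submodule ℝ V :=
  S ⊓ ⨅ s ∈ S, LinearMap.ker (ω.flip s)

/-!
Write `K = ker(ω|_U)`, so that `A = W ∩ U^⊥` and `E = W ∩ W^⊥`. If some `k ∈ K` lies outside `W`,
then `U = W + ℝk`, and every `e ∈ E` is orthogonal to `W` and to `k`, hence to `U`: `A = E`.
If `K ⊆ W`, then `E = U ∩ W^⊥`, since a vector `u ∈ U ∩ W^⊥` outside `W` is orthogonal to
`W + ℝu = U` (as `ω u u = 0`), i.e. lies in `K`. Nondegeneracy gives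
`dim (U ∩ W^⊥) - dim (W ∩ U^⊥) = dim U - dim W = 1`, through `U ∩ W^⊥ = (W + U^⊥)^⊥`.
-/

theorem Submodule.sup_span_singleton_eq_of_finrank_add_one {K V : Type*} [DivisionRing K]
    [AddCommGroup V] [Module K V] [Module.Finite K V] {W U : Submodule K V} (hWU : W ≤ U)
    (hcodim : Module.finrank K W + 1 = Module.finrank K U) {u : V} (hu : u ∈ U) (huW : u ∉ W) :
    W ⊔ span K {u} = U :=
  eq_of_le_of_finrank_le (sup_le hWU ((span_singleton_le_iff_mem u U).mpr hu))
    (by rw [finrank_sup_span_singleton huW, hcodim])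

namespace LinearMap.BilinForm

section CommSemiring

variable {R M : Type*} [CommSemiring R] [AddCommMonoid M] [Module R M]
  (B : LinearMap.BilinForm R M)

theorem orthogonal_sup (S T : Submodule R M) :
    B.orthogonal (S ⊔ T) = B.orthogonal S ⊓ B.orthogonal T := by
  refine le_antisymm (le_inf (B.orthogonal_le le_sup_left) (B.orthogonal_le le_sup_right)) ?_
  rintro v ⟨hS, hT⟩ x hx
  obtain ⟨s, hs, t, ht, rfl⟩ := Submodule.mem_sup.mp hx
  simp [hS s hs, hT t ht]

theorem mem_orthogonal_sup_span_singleton {S : Submodule R M} {u v : M} :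
    v ∈ B.orthogonal (S ⊔ Submodule.span R {u}) ↔ v ∈ B.orthogonal S ∧ B u v = 0 := by
  rw [orthogonal_sup, Submodule.mem_inf]
  refine and_congr_right fun _ =>
    ⟨fun h => h u (Submodule.mem_span_singleton_self u), fun h x hx => ?_⟩
  obtain ⟨a, rfl⟩ := Submodule.mem_span_singleton.mp hx
  simp [h]

end CommSemiring

variable {K V : Type*} [Field K] [AddCommGroup V] [Module K V] [FiniteDimensional K V]
  {B : LinearMap.BilinForm K V}

theorem finrank_inf_orthogonal_add_finrank (hB : B.Nondegenerate) (hB₀ : B.IsRefl)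
    (U W : Submodule K V) :
    Module.finrank K ↥(U ⊓ B.orthogonal W) + Module.finrank K W =
      Module.finrank K ↥(W ⊓ B.orthogonal U) + Module.finrank K U := by
  have hperp : U ⊓ B.orthogonal W = B.orthogonal (W ⊔ B.orthogonal U) := by
    rw [orthogonal_sup, orthogonal_orthogonal hB hB₀, inf_comm]
  have h_sup := Submodule.finrank_sup_add_finrank_inf_eq W (B.orthogonal U)
  rw [hperp, finrank_orthogonal hB]
  have := finrank_orthogonal hB U
  have := Submodule.finrank_le U
  have := Submodule.finrank_le (W ⊔ B.orthogonal U)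
  omega

end LinearMap.BilinForm

open LinearMap.BilinForm

section restKer

variable {V : Type*} [AddCommGroup V] [Module ℝ V] {ω : LinearMap.BilinForm ℝ V}

theorem restKer_eq_inf_orthogonal (hω : ω.IsRefl) (S : Submodule ℝ V) :
    restKer ω S = S ⊓ ω.orthogonal S := by
  ext v
  simp only [restKer, Submodule.mem_inf, Submodule.mem_iInf, LinearMap.mem_ker,
    mem_orthogonal_iff]
  exact and_congr_right fun _ => forall₂_congr fun s _ => ⟨hω _ _, hω _ _⟩

theorem restKer_inf_eq_inf_orthogonal (hω : ω.IsRefl) {U W : Submodule ℝ V} (hWU : W ≤ U) :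
    restKer ω U ⊓ W = W ⊓ ω.orthogonal U := by
  rw [restKer_eq_inf_orthogonal hω, inf_right_comm, inf_eq_right.mpr hWU, inf_comm]

theorem restKer_inf_le_restKer (hω : ω.IsRefl) {U W : Submodule ℝ V} (hWU : W ≤ U) :
    restKer ω U ⊓ W ≤ restKer ω W := by
  rw [restKer_inf_eq_inf_orthogonal hω hWU, restKer_eq_inf_orthogonal hω]
  exact inf_le_inf_left W (ω.orthogonal_le hWU)

variable [FiniteDimensional ℝ V] {U W : Submodule ℝ V}

theorem restKer_inf_eq_restKer_of_not_le (hω : ω.IsRefl) (hWU : W ≤ U)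
    (hcodim : Module.finrank ℝ W + 1 = Module.finrank ℝ U) (hK : ¬ restKer ω U ≤ W) :
    restKer ω U ⊓ W = restKer ω W := by
  obtain ⟨k, hkK, hkW⟩ := SetLike.not_le_iff_exists.mp hK
  rw [restKer_eq_inf_orthogonal hω] at hkK
  refine le_antisymm (restKer_inf_le_restKer hω hWU) ?_
  rw [restKer_inf_eq_inf_orthogonal hω hWU, restKer_eq_inf_orthogonal hω]
  intro e he
  obtain ⟨heW, heWperp⟩ := Submodule.mem_inf.mp he
  refine Submodule.mem_inf.mpr ⟨heW, ?_⟩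
  rw [← Submodule.sup_span_singleton_eq_of_finrank_add_one hWU hcodim hkK.1 hkW,
    mem_orthogonal_sup_span_singleton]
  exact ⟨heWperp, hω _ _ (hkK.2 e (hWU heW))⟩

theorem restKer_eq_inf_orthogonal_of_restKer_le (hω : ω.IsAlt) (hWU : W ≤ U)
    (hcodim : Module.finrank ℝ W + 1 = Module.finrank ℝ U) (hK : restKer ω U ≤ W) :
    restKer ω W = U ⊓ ω.orthogonal W := by
  rw [restKer_eq_inf_orthogonal hω.isRefl]
  refine le_antisymm (inf_le_inf_right _ hWU) fun u ⟨huU, huWperp⟩ => ⟨?_, huWperp⟩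
  by_contra huW
  refine huW (hK ?_)
  rw [restKer_eq_inf_orthogonal hω.isRefl]
  refine Submodule.mem_inf.mpr ⟨huU, ?_⟩
  rw [← Submodule.sup_span_singleton_eq_of_finrank_add_one hWU hcodim huU huW]
  exact (mem_orthogonal_sup_span_singleton ω).mpr ⟨huWperp, hω u⟩

theorem finrank_restKer_eq_finrank_restKer_inf_add_one (hω : ω.IsAlt) (hnd : ω.Nondegenerate)
    (hWU : W ≤ U) (hcodim : Module.finrank ℝ W + 1 = Module.finrank ℝ U)
    (hK : restKer ω U ≤ W) :
    Module.finrank ℝ (restKer ω W) = Module.finrank ℝ ↥(restKer ω U ⊓ W) + 1 := by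
  have := finrank_inf_orthogonal_add_finrank hnd hω.isRefl U W
  rw [restKer_eq_inf_orthogonal_of_restKer_le hω hWU hcodim hK,
    restKer_inf_eq_inf_orthogonal hω.isRefl hWU]
  omega

end restKer

/-- Let `(V, ω)` be a symplectic vector space, `U ⊆ V` a subspace and
`W ⊆ U` a hyperplane in `U`.  Set `K = ker(ω|_U)`, `A = K ∩ W`, `E = ker(ω|_W)`.
Then `A = E` exactly when `K` is not contained in `W` (i.e. `K` is transversal to `W`
in `U`), and otherwise `A ⊊ E` with `dim E = dim A + 1`. -/
theorem stmt11 (V : Type*) [AddCommGroup V] [Module ℝ V] [FiniteDimensional ℝ V]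
    (ω : LinearMap.BilinForm ℝ V)
    (halt : ∀ v : V, ω v v = 0)
    (hnd : ∀ v : V, (∀ w : V, ω v w = 0) → v = 0)
    (U W : Submodule ℝ V) (hWU : W ≤ U)
    (hcodim : Module.finrank ℝ W + 1 = Module.finrank ℝ U) :
    letI K := restKer ω U
    letI A := K ⊓ W
    letI E := restKer ω W
    (A = E ↔ ¬ K ≤ W) ∧
    (A ≠ E → A < E ∧ Module.finrank ℝ E = Module.finrank ℝ A + 1) := by
  have hω : ω.IsAlt := halt
  have hω_nd : ω.Nondegenerate :=
    (LinearMap.IsRefl.nondegenerate_iff_separatingLeft hω.isRefl).mpr hnd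
  have hAE := restKer_inf_le_restKer hω.isRefl hWU
  have transversal := restKer_inf_eq_restKer_of_not_le hω.isRefl hWU hcodim
  have contained := finrank_restKer_eq_finrank_restKer_inf_add_one hω hω_nd hWU hcodim
  refine ⟨⟨fun hAeqE hKW => ?_, transversal⟩, fun hne => ?_⟩
  · have := contained hKW
    rw [hAeqE] at this
    omega
  · have hKW : restKer ω U ≤ W := not_not.mp (mt transversal hne)
    exact ⟨lt_of_le_of_ne hAE hne, contained hKW⟩
end
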